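/- Fix a ∈ (-1,0) ∪ (0,∞) with a ≠ -1/2, γ = a(1+a), and let w_{a,0} be the even solution of w'' = −2p_a·w with w(0) = −1, w'(0) = 0. Then w_{a,0}(k·τ_a) = (−1)^{k+1} for every k ∈ ℕ, where τ_a is the half-period of x_a (so that x_a(2nτ_a) = 1+a and x_a((2n+1)τ_a) = |a|). -/

import Mathlib

/-!
The function `J = 1 + 2γ - 2x² + (x'/x)(2Z - t)`, with `Z' = x² - γ`, solves the Jacobi equation
`J'' = -2(x² + γ²/x²) J`; the computation uses only `x'' = (1 + 2γ)x - 2x³` and its first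
integral `x'² = (1 + 2γ)x² - x⁴ - γ²`. As `J(0) = -(1 + 2a)` and `J'(0) = 0`, uniqueness for
linear second-order equations gives `(1 + 2a) w = J`. At the critical points `kτ` of `x` the last
term of `J` vanishes, and `1 + 2γ - 2x²` equals `-(1 + 2a)` where `x = 1 + a` and `1 + 2a`
where `x = |a|`.
-/

open Set

theorem eq_of_hasDerivAt_of_second_order_linear {q f f' g g' : ℝ → ℝ} {t₀ : ℝ}
    (hq : Continuous q)
    (hf : ∀ t, HasDerivAt f (f' t) t) (hf' : ∀ t, HasDerivAt f' (q t * f t) t)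
    (hg : ∀ t, HasDerivAt g (g' t) t) (hg' : ∀ t, HasDerivAt g' (q t * g t) t)
    (h₀ : f t₀ = g t₀) (h₀' : f' t₀ = g' t₀) : f = g := by
  ext t
  set v : ℝ → ℝ × ℝ → ℝ × ℝ := fun s p => (p.2, q s * p.1)
  obtain ⟨A, B, ht, ht₀⟩ : ∃ A B, t ∈ Ioo A B ∧ t₀ ∈ Ioo A B :=
    ⟨min t t₀ - 1, max t t₀ + 1, by constructor <;> constructor <;> grind⟩
  obtain ⟨C, hC⟩ := isCompact_Icc.exists_bound_of_continuousOn (hq.continuousOn (s := Icc A B))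
  have hv : ∀ s ∈ Ioo A B, LipschitzOnWith (max 1 C.toNNReal) (v s) univ := by
    intro s hs
    have hL : LipschitzWith (max 1 (‖q s‖₊ * 1)) (v s) :=
      LipschitzWith.prod_snd.prodMk ((lipschitzWith_smul (q s)).comp LipschitzWith.prod_fst)
    refine (hL.weaken (max_le_max le_rfl ?_)).lipschitzOnWith
    rw [mul_one, ← NNReal.coe_le_coe, coe_nnnorm]
    exact (hC s (Ioo_subset_Icc_self hs)).trans (Real.le_coe_toNNReal C)
  have hsol : ∀ {u u' : ℝ → ℝ}, (∀ s, HasDerivAt u (u' s) s) →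
      (∀ s, HasDerivAt u' (q s * u s) s) →
      ∀ s ∈ Ioo A B, HasDerivAt (fun r => (u r, u' r)) (v s (u s, u' s)) s ∧ (u s, u' s) ∈ univ :=
    fun hu hu' s _ => ⟨(hu s).prodMk (hu' s), trivial⟩
  exact congrArg Prod.fst <|
    ODE_solution_unique_of_mem_Ioo hv ht₀ (hsol hf hf') (hsol hg hg') (Prod.ext h₀ h₀') ht

theorem duffing_energy_eq {x x' : ℝ → ℝ} {c : ℝ} (hx : ∀ t, HasDerivAt x (x' t) t)
    (hx' : ∀ t, HasDerivAt x' (c * x t - 2 * x t ^ 3) t) (t s : ℝ) :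
    x' t ^ 2 - c * x t ^ 2 + x t ^ 4 = x' s ^ 2 - c * x s ^ 2 + x s ^ 4 := by
  have hE : ∀ t, HasDerivAt (fun r => x' r ^ 2 - c * x r ^ 2 + x r ^ 4) 0 t := fun t => by
    refine ((((hx' t).pow 2).sub (((hx t).pow 2).const_mul c)).add ((hx t).pow 4)).congr_deriv ?_
    push_cast
    ring
  exact is_const_of_deriv_eq_zero (fun r => (hE r).differentiableAt) (fun r => (hE r).deriv) t s

theorem delaunay_energy {x x' : ℝ → ℝ} {a γ : ℝ} (hγ : γ = a * (1 + a))
    (hx : ∀ t, HasDerivAt x (x' t) t)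
    (hx' : ∀ t, HasDerivAt x' ((1 + 2 * γ) * x t - 2 * x t ^ 3) t)
    (h₀ : x 0 = 1 + a) (h₀' : x' 0 = 0) (t : ℝ) :
    x' t ^ 2 = (1 + 2 * γ) * x t ^ 2 - x t ^ 4 - γ ^ 2 := by
  have hE := duffing_energy_eq hx hx' t 0
  have hE₀ : -(1 + 2 * γ) * (1 + a) ^ 2 + (1 + a) ^ 4 = -γ ^ 2 := by rw [hγ]; ring
  rw [h₀, h₀'] at hE
  linear_combination hE + hE₀

/-- With `Z = z`, this is `(1 + 2a) w_{a,0}` in the paper's notation. -/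
noncomputable def jacobiField (γ : ℝ) (x x' Z : ℝ → ℝ) (t : ℝ) : ℝ :=
  1 + 2 * γ - 2 * x t ^ 2 + x' t / x t * (2 * Z t - t)

noncomputable def jacobiFieldDeriv (γ : ℝ) (x x' Z : ℝ → ℝ) (t : ℝ) : ℝ :=
  -(4 * x t * x' t) + (γ ^ 2 / x t ^ 2 - x t ^ 2) * (2 * Z t - t)
    + x' t / x t * (2 * x t ^ 2 - 2 * γ - 1)

section JacobiField

variable {γ t : ℝ} {x x' Z : ℝ → ℝ}

theorem hasDerivAt_deriv_div_self (hx : HasDerivAt x (x' t) t)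
    (hx' : HasDerivAt x' ((1 + 2 * γ) * x t - 2 * x t ^ 3) t)
    (henergy : x' t ^ 2 = (1 + 2 * γ) * x t ^ 2 - x t ^ 4 - γ ^ 2) (hxt : x t ≠ 0) :
    HasDerivAt (fun s => x' s / x s) (γ ^ 2 / x t ^ 2 - x t ^ 2) t := by
  refine (hx'.div hx hxt).congr_deriv ?_
  field_simp
  linear_combination -henergy

theorem hasDerivAt_jacobiField (hx : HasDerivAt x (x' t) t)
    (hx' : HasDerivAt x' ((1 + 2 * γ) * x t - 2 * x t ^ 3) t)
    (henergy : x' t ^ 2 = (1 + 2 * γ) * x t ^ 2 - x t ^ 4 - γ ^ 2) (hxt : x t ≠ 0)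
    (hZ : HasDerivAt Z (x t ^ 2 - γ) t) :
    HasDerivAt (jacobiField γ x x' Z) (jacobiFieldDeriv γ x x' Z t) t := by
  have hlin : HasDerivAt (fun s => 2 * Z s - s) (2 * (x t ^ 2 - γ) - 1) t :=
    (hZ.const_mul 2).sub (hasDerivAt_id t)
  refine ((((hx.pow 2).const_mul 2).const_sub (1 + 2 * γ)).add
    ((hasDerivAt_deriv_div_self hx hx' henergy hxt).mul hlin)).congr_deriv ?_
  unfold jacobiFieldDeriv
  field_simp
  ring

theorem hasDerivAt_jacobiFieldDeriv (hx : HasDerivAt x (x' t) t)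
    (hx' : HasDerivAt x' ((1 + 2 * γ) * x t - 2 * x t ^ 3) t)
    (henergy : x' t ^ 2 = (1 + 2 * γ) * x t ^ 2 - x t ^ 4 - γ ^ 2) (hxt : x t ≠ 0)
    (hZ : HasDerivAt Z (x t ^ 2 - γ) t) :
    HasDerivAt (jacobiFieldDeriv γ x x' Z)
      (-2 * (x t ^ 2 + γ ^ 2 / x t ^ 2) * jacobiField γ x x' Z t) t := by
  have hlin : HasDerivAt (fun s => 2 * Z s - s) (2 * (x t ^ 2 - γ) - 1) t :=
    (hZ.const_mul 2).sub (hasDerivAt_id t)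
  have hcoef : HasDerivAt (fun s => γ ^ 2 / x s ^ 2 - x s ^ 2)
      (-2 * γ ^ 2 * x' t / x t ^ 3 - 2 * x t * x' t) t := by
    refine (((hasDerivAt_const t (γ ^ 2)).div (hx.pow 2) (pow_ne_zero 2 hxt)).sub
      (hx.pow 2)).congr_deriv ?_
    simp only [Pi.pow_apply]
    field_simp
    ring
  refine ((((hx.const_mul 4).mul hx').neg.add (hcoef.mul hlin)).add
    ((hasDerivAt_deriv_div_self hx hx' henergy hxt).mul
      ((((hx.pow 2).const_mul 2).sub_const (2 * γ)).sub_const 1))).congr_deriv ?_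
  unfold jacobiField
  simp only [Pi.pow_apply]
  field_simp
  ring

theorem jacobiField_of_deriv_eq_zero (h : x' t = 0) :
    jacobiField γ x x' Z t = 1 + 2 * γ - 2 * x t ^ 2 := by
  simp [jacobiField, h]

end JacobiField

theorem wa0_values_at_multiples_general (a γ τ : ℝ) (x w : ℝ → ℝ)
    (ha' : a ≠ -(1 / 2))
    (hγ : γ = a * (1 + a))
    (hx : ContDiff ℝ 2 x) (hxpos : ∀ t, 0 < x t)
    (hode : ∀ t, deriv (deriv x) t = (1 + 2 * γ) * x t - 2 * (x t) ^ 3)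
    (hx0 : x 0 = 1 + a) (hx'0 : deriv x 0 = 0)
    (hval : ∀ n : ℕ, x (2 * (n : ℝ) * τ) = 1 + a ∧ x ((2 * (n : ℝ) + 1) * τ) = |a|)
    (hcrit : ∀ k : ℕ, deriv x ((k : ℝ) * τ) = 0)
    (hw : ContDiff ℝ 2 w)
    (hwode : ∀ t, deriv (deriv w) t = -2 * ((x t) ^ 2 + γ ^ 2 / (x t) ^ 2) * w t)
    (hw0 : w 0 = -1) (hw'0 : deriv w 0 = 0) :
    ∀ k : ℕ, w ((k : ℝ) * τ) = (-1 : ℝ) ^ (k + 1) := by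
  have hxne : ∀ t, x t ≠ 0 := fun t => (hxpos t).ne'
  have hx₁ : ∀ t, HasDerivAt x (deriv x t) t := fun t => (hx.differentiable two_ne_zero t).hasDerivAt
  have hx₂ : ∀ t, HasDerivAt (deriv x) ((1 + 2 * γ) * x t - 2 * x t ^ 3) t :=
    fun t => hode t ▸ (hx.differentiable_deriv_two t).hasDerivAt
  have henergy := delaunay_energy hγ hx₁ hx₂ hx0 hx'0
  set Z : ℝ → ℝ := fun u => ∫ s in (0 : ℝ)..u, (x s ^ 2 - γ)
  have hZ : ∀ t, HasDerivAt Z (x t ^ 2 - γ) t := fun t =>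
    ((hx.continuous.pow 2).sub continuous_const).integral_hasStrictDerivAt 0 t |>.hasDerivAt
  have hq : Continuous fun t => -2 * (x t ^ 2 + γ ^ 2 / x t ^ 2) := by
    fun_prop (disch := exact fun t => pow_ne_zero 2 (hxne t))
  have hJ : jacobiField γ x (deriv x) Z = fun t => (1 + 2 * a) * w t := by
    refine eq_of_hasDerivAt_of_second_order_linear (t₀ := 0) hq
      (fun t => hasDerivAt_jacobiField (hx₁ t) (hx₂ t) (henergy t) (hxne t) (hZ t))
      (fun t => hasDerivAt_jacobiFieldDeriv (hx₁ t) (hx₂ t) (henergy t) (hxne t) (hZ t))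
      (fun t => ((hw.differentiable two_ne_zero t).hasDerivAt).const_mul _) (fun t => ?_) ?_ ?_
    · refine ((hw.differentiable_deriv_two t).hasDerivAt.const_mul (1 + 2 * a)).congr_deriv ?_
      rw [hwode]; ring
    · rw [jacobiField_of_deriv_eq_zero hx'0, hx0, hw0, hγ]; ring
    · simp [jacobiFieldDeriv, hx'0, hw'0, Z]
  intro k
  have hk := congrFun hJ (k * τ)
  rw [jacobiField_of_deriv_eq_zero (hcrit k)] at hk
  refine mul_left_cancel₀ (fun h => ha' (by linarith)) (hk.symm.trans ?_)
  rcases Nat.even_or_odd' k with ⟨n, rfl | rfl⟩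
  · rw [Nat.cast_mul, Nat.cast_two, (hval n).1, hγ, (odd_two_mul_add_one n).neg_one_pow]; ring
  · rw [Nat.cast_succ, Nat.cast_mul, Nat.cast_two, (hval n).2, sq_abs, hγ,
      (odd_two_mul_add_one n).add_one.neg_one_pow]; ring

/-- Values of the even principal Jacobi field `w_{a,0}` at multiples of the
half-period: `w_{a,0}(k τ_a) = (−1)^{k+1}` for every `k ∈ ℕ`. -/
theorem wa0_values_at_multiples (a γ τ : ℝ) (x z w : ℝ → ℝ)
    (ha : a ∈ Set.Ioo (-1 : ℝ) 0 ∪ Set.Ioi (0 : ℝ)) (ha' : a ≠ -(1 / 2))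
    (hγ : γ = a * (1 + a)) (hτ : 0 < τ)
    (hx : ContDiff ℝ 2 x) (hxpos : ∀ t, 0 < x t)
    (hode : ∀ t, deriv (deriv x) t = (1 + 2 * γ) * x t - 2 * (x t) ^ 3)
    (hx0 : x 0 = 1 + a) (hx'0 : deriv x 0 = 0)
    (hz : ∀ t, deriv z t = (x t) ^ 2 - γ) (hz0 : z 0 = 0)
    (hval : ∀ n : ℕ, x (2 * (n : ℝ) * τ) = 1 + a ∧ x ((2 * (n : ℝ) + 1) * τ) = |a|)
    (hcrit : ∀ k : ℕ, deriv x ((k : ℝ) * τ) = 0)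
    (hw : ContDiff ℝ 2 w) (hweven : ∀ t, w (-t) = w t)
    (hwode : ∀ t, deriv (deriv w) t = -2 * ((x t) ^ 2 + γ ^ 2 / (x t) ^ 2) * w t)
    (hw0 : w 0 = -1) (hw'0 : deriv w 0 = 0) :
    ∀ k : ℕ, w ((k : ℝ) * τ) = (-1 : ℝ) ^ (k + 1) :=
  wa0_values_at_multiples_general a γ τ x w ha' hγ hx hxpos hode hx0 hx'0 hval hcrit hw hwode hw0
    hw'0
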